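/- arXiv:1310.6521 — 2 statements merged into one kernel-verified Lean document; each statement's English description precedes it below -/
import Mathlib

section
/- The polytope Q̄ = Conv{(0,0,0),(5,0,0),(0,5,0),(0,0,2),(1,0,2),(0,1,2)} ⊂ ℝ³ (anticanonical polytope of the Fano class (4)) has exactly one interior lattice point and is a normal lattice polytope. -/
/-!
`Q̄` is cut out by `0 ≤ x, y, z`, `z ≤ 2` and `x + y + 2z ≤ 5`. An interior lattice point
satisfies all five inequalities strictly, which leaves only `(1, 1, 1)`. For normality, a lattice
point of `(n + 1) Q̄` splits as a lattice point of `Q̄` plus one of `n Q̄`: the summand in `Q̄`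
takes height `min z 2` and, in the first two coordinates, just enough mass for the remainder to
satisfy `x + y + 2z ≤ 5n`.
-/

open scoped Pointwise

def IsLatticePt {d : ℕ} (x : Fin d → ℝ) : Prop := ∀ i, ∃ z : ℤ, x i = (z : ℝ)

def IsLatticePolytope {d : ℕ} (P : Set (Fin d → ℝ)) : Prop :=
  ∃ V : Finset (Fin d → ℝ), V.Nonempty ∧ (∀ v ∈ V, IsLatticePt v) ∧ P = convexHull ℝ ↑V

def IsNormalPolytope {d : ℕ} (P : Set (Fin d → ℝ)) : Prop :=
  ∀ n : ℕ, 1 ≤ n → ∀ x ∈ (n : ℝ) • P, IsLatticePt x →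
    ∃ f : Fin n → (Fin d → ℝ), (∀ i, f i ∈ P ∧ IsLatticePt (f i)) ∧ x = ∑ i, f i

def P1 : Set (Fin 3 → ℝ) := convexHull ℝ {![0,0,0], ![1,0,0], ![0,1,0], ![0,0,1]}

def dot2 (x y : Fin 2 → ℝ) : ℝ := ∑ i, x i * y i

def normalCone (P : Set (Fin 2 → ℝ)) (u : Fin 2 → ℝ) : Set (Fin 2 → ℝ) :=
  {y | ∀ x ∈ P, dot2 x y ≤ dot2 u y}

/-- The normal fan of `A` refines the normal fan of `B`: every normal cone of `A`
is contained in some normal cone of `B`. -/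
def FanRefines (A B : Set (Fin 2 → ℝ)) : Prop :=
  ∀ u ∈ A, ∃ v ∈ B, normalCone A u ⊆ normalCone B v

/-- At every vertex the primitive edge directions form a ℤ-basis of ℤ². -/
def IsSmoothPolygon (F : Set (Fin 2 → ℝ)) : Prop :=
  ∀ u ∈ Set.extremePoints ℝ F, ∃ m₁ m₂ : Fin 2 → ℤ,
    (m₁ 0 * m₂ 1 - m₁ 1 * m₂ 0 = 1 ∨ m₁ 0 * m₂ 1 - m₁ 1 * m₂ 0 = -1) ∧
    {y : Fin 2 → ℝ | ∃ t : ℝ, ∃ x ∈ F, 0 ≤ t ∧ y = t • (x - u)} =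
      {y : Fin 2 → ℝ | ∃ a b : ℝ, 0 ≤ a ∧ 0 ≤ b ∧
        y = a • (fun i => (m₁ i : ℝ)) + b • (fun i => (m₂ i : ℝ))}

def emb (v : Fin 2 → ℝ) (t : ℝ) : Fin 3 → ℝ := ![v 0, v 1, t]

def cayley (F G : Set (Fin 2 → ℝ)) : Set (Fin 3 → ℝ) :=
  convexHull ℝ ((fun v => emb v 0) '' F ∪ (fun v => emb v 1) '' G)

/-- The inequalities of `t • Q̄`, stated over any ordered ring so that they serve for lattice
points over `ℤ` as well. -/
def qbar {R : Type*} [Ring R] [LE R] (t : R) : Set (Fin 3 → R) :=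
  {p | 0 ≤ p 0 ∧ 0 ≤ p 1 ∧ 0 ≤ p 2 ∧ p 2 ≤ 2 * t ∧ p 0 + p 1 + 2 * p 2 ≤ 5 * t}

lemma convex_qbar (t : ℝ) : Convex ℝ (qbar t) := by
  rintro x ⟨hx₀, hx₁, hx₂, hx₃, hx₄⟩ y ⟨hy₀, hy₁, hy₂, hy₃, hy₄⟩ a b ha hb hab
  simp only [qbar, Set.mem_ofPred_eq, Pi.add_apply, Pi.smul_apply, smul_eq_mul]
  refine ⟨by positivity, by positivity, by positivity, ?_, ?_⟩ <;> nlinarith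

lemma convexHull_subset_qbar :
    convexHull ℝ {![0,0,0], ![5,0,0], ![0,5,0], ![0,0,2], ![1,0,2], ![0,1,2]} ⊆ qbar (1 : ℝ) := by
  refine convexHull_min ?_ (convex_qbar 1)
  simp only [Set.insert_subset_iff, Set.singleton_subset_iff]
  norm_num [qbar, Matrix.cons_val_two]

lemma qbar_subset_convexHull :
    qbar (1 : ℝ) ⊆ convexHull ℝ {![0,0,0], ![5,0,0], ![0,5,0], ![0,0,2], ![1,0,2], ![0,1,2]} := by
  rintro p ⟨h₀, h₁, h₂, h₃, h₄⟩
  -- `u` is the weight shifted from `(0,0,2)` onto `(1,0,2)` and `(0,1,2)`: the least amount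
  -- that keeps the weight of the origin nonnegative.
  set u := max 0 (p 0 + p 1 + 5 / 2 * p 2 - 5)
  set a := min (p 0) u
  have hu₀ : 0 ≤ u := le_max_left _ _
  have hu₁ : p 0 + p 1 + 5 / 2 * p 2 - 5 ≤ u := le_max_right _ _
  have hu₂ : u ≤ p 2 / 2 := max_le (by linarith) (by linarith)
  have ha₀ : 0 ≤ a := le_min h₀ hu₀
  have ha₁ : a ≤ p 0 := min_le_left _ _
  have ha₂ : a ≤ u := min_le_right _ _
  have hu₃ : u ≤ p 0 + p 1 := max_le (by linarith) (by linarith)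
  have ha₃ : u - a ≤ p 1 := by
    rcases le_total (p 0) u with h | h <;> simp only [a, min_eq_left, min_eq_right, h] <;> linarith
  let w : Fin 6 → ℝ := ![1 - (p 0 + p 1 - u) / 5 - p 2 / 2, (p 0 - a) / 5, (p 1 - (u - a)) / 5,
    p 2 / 2 - u, a, u - a]
  let v : Fin 6 → Fin 3 → ℝ := ![![0,0,0], ![5,0,0], ![0,5,0], ![0,0,2], ![1,0,2], ![0,1,2]]
  have hp : p = ∑ i, w i • v i := by
    ext j
    fin_cases j <;>
      simp only [w, v, Fin.sum_univ_six, Finset.sum_apply, Pi.smul_apply, smul_eq_mul, Fin.isValue,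
        Fin.zero_eta, Fin.mk_one, Fin.reduceFinMk, Matrix.cons_val_zero, Matrix.cons_val_one,
        Matrix.cons_val] <;> ring
  rw [hp]
  refine (convex_convexHull ℝ _).sum_mem (fun i _ => ?_) ?_ (fun i _ => subset_convexHull ℝ _ ?_)
  · fin_cases i <;>
      simp only [w, Fin.isValue, Fin.zero_eta, Fin.mk_one, Fin.reduceFinMk, Matrix.cons_val_zero,
        Matrix.cons_val_one, Matrix.cons_val] <;> linarith
  · simp only [w, Fin.sum_univ_six, Matrix.cons_val_zero, Matrix.cons_val_one, Matrix.cons_val]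
    ring
  · fin_cases i <;> simp [v]

lemma convexHull_eq_qbar :
    convexHull ℝ {![0,0,0], ![5,0,0], ![0,5,0], ![0,0,2], ![1,0,2], ![0,1,2]} = qbar (1 : ℝ) :=
  convexHull_subset_qbar.antisymm qbar_subset_convexHull

lemma smul_qbar_one {t : ℝ} (ht : 0 < t) : t • qbar (1 : ℝ) = qbar t := by
  ext p
  rw [Set.mem_smul_set_iff_inv_smul_mem₀ ht.ne']
  simp only [qbar, Set.mem_ofPred_eq, Pi.smul_apply, smul_eq_mul, mul_left_comm (2 : ℝ) t⁻¹,
    ← mul_add, inv_mul_le_iff₀ ht, mul_one, mul_nonneg_iff_of_pos_left (inv_pos.2 ht), mul_comm t]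

lemma exists_pos_add_smul_mem_of_mem_interior {E : Type*} [AddCommGroup E] [Module ℝ E]
    [TopologicalSpace E] [ContinuousAdd E] [ContinuousSMul ℝ E] {s : Set E} {x : E}
    (hx : x ∈ interior s) (v : E) : ∃ t : ℝ, 0 < t ∧ x + t • v ∈ s := by
  have hline : ∀ᶠ t : ℝ in nhds 0, x + t • v ∈ s :=
    (Continuous.tendsto' (by fun_prop) 0 x (by simp)).eventually (mem_interior_iff_mem_nhds.1 hx)
  obtain ⟨t, hts, ht⟩ := (hline.filter_mono (nhdsWithin_le_nhds (s := Set.Ioi 0))).and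
    self_mem_nhdsWithin |>.exists
  exact ⟨t, ht, hts⟩

lemma mem_interior_qbar_one : (fun _ => 1 : Fin 3 → ℝ) ∈ interior (qbar (1 : ℝ)) := by
  have hopen : IsOpen {p : Fin 3 → ℝ | 0 < p 0 ∧ 0 < p 1 ∧ 0 < p 2 ∧ p 2 < 2 ∧
      p 0 + p 1 + 2 * p 2 < 5} := by
    simp only [Set.ofPred_and]
    refine (isOpen_lt ?_ ?_).inter ((isOpen_lt ?_ ?_).inter ((isOpen_lt ?_ ?_).inter
      ((isOpen_lt ?_ ?_).inter (isOpen_lt ?_ ?_)))) <;> fun_prop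
  refine interior_maximal (fun p hp => ?_) hopen ?_
  · obtain ⟨h₀, h₁, h₂, h₃, h₄⟩ := hp
    exact ⟨h₀.le, h₁.le, h₂.le, by linarith, by linarith⟩
  · norm_num

lemma eq_one_of_mem_interior_qbar {x : Fin 3 → ℝ} (hx : x ∈ interior (qbar (1 : ℝ)))
    (hlat : IsLatticePt x) : x = fun _ => 1 := by
  obtain ⟨t, ht, hup⟩ := exists_pos_add_smul_mem_of_mem_interior hx (fun _ => 1)
  obtain ⟨s, hs, hdown⟩ := exists_pos_add_smul_mem_of_mem_interior hx (fun _ => -1)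
  choose z hz using hlat
  obtain ⟨-, -, -, hup₃, hup₄⟩ := hup
  obtain ⟨hdown₀, hdown₁, hdown₂, -, -⟩ := hdown
  simp only [Pi.add_apply, Pi.smul_apply, smul_eq_mul, hz] at hup₃ hup₄ hdown₀ hdown₁ hdown₂
  have h₀ : 0 < z 0 := by exact_mod_cast (by linarith : (0 : ℝ) < z 0)
  have h₁ : 0 < z 1 := by exact_mod_cast (by linarith : (0 : ℝ) < z 1)
  have h₂ : 0 < z 2 := by exact_mod_cast (by linarith : (0 : ℝ) < z 2)
  have h₃ : z 2 < 2 := by exact_mod_cast (by linarith : (z 2 : ℝ) < 2)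
  have h₄ : z 0 + z 1 + 2 * z 2 < 5 := by
    exact_mod_cast (by linarith : (z 0 + z 1 + 2 * z 2 : ℝ) < 5)
  ext i
  fin_cases i <;>
    simp only [hz, Fin.isValue, Fin.zero_eta, Fin.mk_one, Fin.reduceFinMk, Int.cast_eq_one] <;>
    omega

lemma IsLatticePt.sub {d : ℕ} {x y : Fin d → ℝ} (hx : IsLatticePt x) (hy : IsLatticePt y) :
    IsLatticePt (x - y) := fun i => by
  obtain ⟨a, ha⟩ := hx i
  obtain ⟨b, hb⟩ := hy i
  exact ⟨a - b, by simp [ha, hb]⟩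

lemma isNormalPolytope_of_exists_sub_mem {d : ℕ} {P : Set (Fin d → ℝ)}
    (h : ∀ n : ℕ, 1 ≤ n → ∀ x ∈ ((n + 1 : ℕ) : ℝ) • P, IsLatticePt x →
      ∃ y ∈ P, IsLatticePt y ∧ x - y ∈ (n : ℝ) • P) :
    IsNormalPolytope P := by
  intro n hn
  induction n, hn using Nat.le_induction with
  | base => exact fun x hx hlat => ⟨fun _ => x, fun _ => ⟨by simpa using hx, hlat⟩, by simp⟩
  | succ n hn ih =>
    intro x hx hlat
    obtain ⟨y, hy, hylat, hxy⟩ := h n hn x hx hlat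
    obtain ⟨f, hf, hsum⟩ := ih (x - y) hxy (hlat.sub hylat)
    refine ⟨Fin.cons y f, Fin.cases ⟨hy, hylat⟩ hf, ?_⟩
    rw [Fin.sum_cons, ← hsum, add_sub_cancel]

lemma exists_sub_mem_qbar_of_mem_qbar_succ {n : ℤ} (hn : 0 ≤ n) {z : Fin 3 → ℤ}
    (hz : z ∈ qbar (n + 1)) :
    ∃ w ∈ qbar (1 : ℤ), z - w ∈ qbar n := by
  obtain ⟨h₀, h₁, h₂, h₃, h₄⟩ := hz
  let c := min (z 2) 2
  let s := max 0 (z 0 + z 1 + 2 * z 2 - 2 * c - 5 * n)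
  refine ⟨![min (z 0) s, s - min (z 0) s, c], ?_, ?_⟩ <;>
    simp only [qbar, Set.mem_ofPred_eq, Pi.sub_apply, Matrix.cons_val_zero, Matrix.cons_val_one,
      Matrix.cons_val_two, Matrix.head_cons, Matrix.tail_cons] <;> omega

lemma intCast_mem_qbar_iff (z : Fin 3 → ℤ) (t : ℤ) :
    (fun i => (z i : ℝ)) ∈ qbar (t : ℝ) ↔ z ∈ qbar t := by
  simp only [qbar, Set.mem_ofPred_eq]
  norm_cast

lemma exists_isLatticePt_sub_mem_smul_qbar {n : ℕ} (hn : 1 ≤ n) {x : Fin 3 → ℝ}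
    (hx : x ∈ ((n + 1 : ℕ) : ℝ) • qbar (1 : ℝ)) (hlat : IsLatticePt x) :
    ∃ y ∈ qbar (1 : ℝ), IsLatticePt y ∧ x - y ∈ (n : ℝ) • qbar (1 : ℝ) := by
  choose z hz using hlat
  obtain rfl : x = fun i => (z i : ℝ) := funext hz
  rw [smul_qbar_one (by positivity)] at hx
  rw [smul_qbar_one (by positivity)]
  obtain ⟨w, hw, hzw⟩ := exists_sub_mem_qbar_of_mem_qbar_succ (Int.natCast_nonneg n)
    ((intCast_mem_qbar_iff z _).1 (by exact_mod_cast hx))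
  refine ⟨fun i => (w i : ℝ), by exact_mod_cast (intCast_mem_qbar_iff w 1).2 hw,
    fun i => ⟨w i, rfl⟩, ?_⟩
  have hcast : (fun i => (z i : ℝ)) - (fun i => (w i : ℝ)) = fun i => ((z - w) i : ℝ) := by
    ext i
    simp
  exact hcast ▸ (intCast_mem_qbar_iff (z - w) n).2 hzw

/-- The anticanonical polytope of Fano class (4) has a unique interior lattice point
and is normal. -/
theorem stmt15 :
    (∃! x : Fin 3 → ℝ, x ∈ interior (convexHull ℝ
        {![0,0,0], ![5,0,0], ![0,5,0], ![0,0,2], ![1,0,2], ![0,1,2]} :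
        Set (Fin 3 → ℝ)) ∧ IsLatticePt x) ∧
    IsNormalPolytope (convexHull ℝ
        {![0,0,0], ![5,0,0], ![0,5,0], ![0,0,2], ![1,0,2], ![0,1,2]} :
        Set (Fin 3 → ℝ)) := by
  rw [convexHull_eq_qbar]
  refine ⟨⟨fun _ => 1, ⟨mem_interior_qbar_one, fun _ => ⟨1, by simp⟩⟩,
    fun x hx => eq_one_of_mem_interior_qbar hx.1 hx.2⟩, ?_⟩
  exact isNormalPolytope_of_exists_sub_mem fun n hn x hx hlat =>
    exists_isLatticePt_sub_mem_smul_qbar hn hx hlat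
end

section
/- Normality of polytopes P = nP₁ with facet cuts of the blowup type: let n ≥ 1, 1 ≤ m ≤ n−1, and let P = nP₁ ∩ {z ≤ m} ∩ {x ≤ l₁} for m+1 ≤ l₁ ≤ n−1, assumed 3-dimensional with all vertices in ℤ³. Then P is normal. -/
open scoped Pointwise

/-! In the coordinates `s₁ = x₀`, `s₂ = x₀ + x₂`, `s₃ = x₀ + x₁ + x₂` (and `s₀ = 0`) the polytope
is cut out by difference constraints `sⱼ - sᵢ ≤ c`. A lattice point `S` of `kP` is the sum of the `k`
points with partial sums `⌊(S + i) / k⌋`, `0 ≤ i < k`: each of them satisfies every constraint of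
`P`, because `⌊(s + i) / k⌋ - ⌊(t + i) / k⌋ ≤ c` whenever `s - t ≤ k c`, and they sum to `S` by
Hermite's identity `∑ i < k, ⌊(s + i) / k⌋ = s`. -/

namespace Int

theorem sum_range_add_ediv (a : ℤ) {k : ℕ} (hk : 0 < k) :
    ∑ i ∈ Finset.range k, (a + i) / k = a := by
  have hshift (b : ℤ) :
      ∑ i ∈ Finset.range k, (b + 1 + i) / k = ∑ i ∈ Finset.range k, (b + i) / k + 1 := by
    have hlast : (b + k) / k = b / k + 1 := by
      simpa using Int.add_mul_ediv_right b 1 (by exact_mod_cast hk.ne' : (k : ℤ) ≠ 0)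
    have := Finset.sum_range_succ' (fun i : ℕ => (b + i) / k) k
    rw [Finset.sum_range_succ] at this
    push_cast [add_zero] at this
    simp only [add_assoc, add_comm (1 : ℤ)]
    linarith
  induction a using Int.induction_on with
  | zero =>
    refine Finset.sum_eq_zero fun i hi => ?_
    rw [zero_add]
    exact Int.ediv_eq_zero_of_lt (by positivity) (by exact_mod_cast Finset.mem_range.mp hi)
  | succ b ih => rw [hshift, ih]
  | pred b ih => have := hshift (-(b : ℤ) - 1); simp only [sub_add_cancel] at this; linarith

theorem add_ediv_sub_add_ediv_le {k : ℕ} (hk : 0 < k) (i : ℤ) {s t c : ℤ} (h : s - t ≤ k * c) :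
    (s + i) / k - (t + i) / k ≤ c := by
  have : (s + i) / k ≤ (t + i + c * k) / k :=
    Int.ediv_le_ediv (by exact_mod_cast hk) (by linarith)
  rw [Int.add_mul_ediv_right _ _ (by exact_mod_cast hk.ne')] at this
  linarith

end Int

def truncSimplex {R : Type*} [Zero R] [Add R] [LE R] (a b c : R) : Set (Fin 3 → R) :=
  {x | 0 ≤ x 0 ∧ 0 ≤ x 1 ∧ 0 ≤ x 2 ∧ x 0 + x 1 + x 2 ≤ a ∧ x 2 ≤ b ∧ x 0 ≤ c}

theorem convex_truncSimplex (a b c : ℝ) : Convex ℝ (truncSimplex a b c) := by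
  rintro x ⟨hx₀, hx₁, hx₂, hxs, hxb, hxc⟩ y ⟨hy₀, hy₁, hy₂, hys, hyb, hyc⟩ s t hs ht hst
  simp only [truncSimplex, Set.mem_ofPred_eq, Pi.add_apply, Pi.smul_apply, smul_eq_mul]
  refine ⟨?_, ?_, ?_, ?_, ?_, ?_⟩ <;> nlinarith

theorem P1_eq_truncSimplex : P1 = truncSimplex 1 1 1 := by
  apply (convexHull_min _ (convex_truncSimplex 1 1 1)).antisymm
  · rintro x ⟨hx₀, hx₁, hx₂, hxs, -, -⟩
    rw [mem_convexHull_iff_exists_fintype]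
    refine ⟨Fin 4, inferInstance, ![1 - (x 0 + x 1 + x 2), x 0, x 1, x 2],
      ![![0, 0, 0], ![1, 0, 0], ![0, 1, 0], ![0, 0, 1]], ?_, ?_, ?_, ?_⟩
    · intro i; fin_cases i <;> simp <;> linarith
    · simp [Fin.sum_univ_four]; ring
    · intro i; fin_cases i <;> simp
    · ext j; fin_cases j <;> simp [Fin.sum_univ_four]
  · rintro v hv
    simp only [Set.mem_insert_iff, Set.mem_singleton_iff] at hv
    rcases hv with rfl | rfl | rfl | rfl <;>
      norm_num [truncSimplex, Matrix.cons_val_two, Matrix.tail_cons, Matrix.head_cons]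

theorem smul_truncSimplex {c : ℝ} (hc : 0 < c) (a b d : ℝ) :
    c • truncSimplex a b d = truncSimplex (c * a) (c * b) (c * d) := by
  ext x
  rw [Set.mem_smul_set_iff_inv_smul_mem₀ hc.ne']
  simp only [truncSimplex, Set.mem_ofPred_eq, Pi.smul_apply, smul_eq_mul, ← mul_add,
    inv_mul_le_iff₀ hc, mul_nonneg_iff_of_pos_left (inv_pos.mpr hc)]

theorem truncSimplex_inter (a b c : ℝ) :
    truncSimplex a a a ∩ {x | x 2 ≤ b} ∩ {x | x 0 ≤ c} = truncSimplex a b c := by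
  ext x
  simp only [truncSimplex, Set.mem_inter_iff, Set.mem_ofPred_eq]
  constructor
  · rintro ⟨⟨⟨h₀, h₁, h₂, hs, -, -⟩, hb⟩, hc⟩
    exact ⟨h₀, h₁, h₂, hs, hb, hc⟩
  · rintro ⟨h₀, h₁, h₂, hs, hb, hc⟩
    exact ⟨⟨⟨h₀, h₁, h₂, hs, by linarith, by linarith⟩, hb⟩, hc⟩

section Lattice

def splitPart (k : ℕ) (i : ℤ) (X : Fin 3 → ℤ) : Fin 3 → ℤ :=
  let q : ℤ → ℤ := fun s => (s + i) / k
  ![q (X 0), q (X 0 + X 1 + X 2) - q (X 0 + X 2), q (X 0 + X 2) - q (X 0)]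

variable {k : ℕ}

theorem splitPart_mem_truncSimplex (hk : 0 < k) {i : ℤ} (hi₀ : 0 ≤ i) (hik : i < k)
    {a b c : ℤ} {X : Fin 3 → ℤ} (hX : X ∈ truncSimplex (k * a) (k * b) (k * c)) :
    splitPart k i X ∈ truncSimplex a b c := by
  obtain ⟨h₀, h₁, h₂, hsum, hb, hc⟩ := hX
  have hq := fun (s t c : ℤ) (h : s - t ≤ k * c) => Int.add_ediv_sub_add_ediv_le hk i h
  have hq₀ : (0 + i) / (k : ℤ) = 0 := by rw [zero_add]; exact Int.ediv_eq_zero_of_lt hi₀ hik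
  simp only [splitPart, truncSimplex, Set.mem_ofPred_eq, Matrix.cons_val_zero,
    Matrix.cons_val_one, Matrix.cons_val_two, Matrix.head_cons, Matrix.tail_cons]
  refine ⟨?_, ?_, ?_, ?_, ?_, ?_⟩
  · linarith [hq 0 (X 0) 0 (by linarith)]
  · linarith [hq (X 0 + X 2) (X 0 + X 1 + X 2) 0 (by linarith)]
  · linarith [hq (X 0) (X 0 + X 2) 0 (by linarith)]
  · linarith [hq (X 0 + X 1 + X 2) 0 a (by linarith)]
  · exact hq (X 0 + X 2) (X 0) b (by linarith)
  · linarith [hq (X 0) 0 c (by linarith)]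

theorem sum_splitPart (hk : 0 < k) (X : Fin 3 → ℤ) : ∑ i : Fin k, splitPart k i X = X := by
  have hermite (s : ℤ) : ∑ i : Fin k, (s + (i : ℕ)) / (k : ℤ) = s := by
    rw [Fin.sum_univ_eq_sum_range (fun i : ℕ => (s + i) / (k : ℤ))]
    exact Int.sum_range_add_ediv s hk
  ext j
  fin_cases j <;>
    simp [splitPart, Finset.sum_apply, Finset.sum_sub_distrib, hermite]

theorem exists_sum_eq_of_mem_truncSimplex (hk : 0 < k) {a b c : ℤ} {X : Fin 3 → ℤ}
    (hX : X ∈ truncSimplex (k * a) (k * b) (k * c)) :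
    ∃ f : Fin k → Fin 3 → ℤ, (∀ i, f i ∈ truncSimplex a b c) ∧ ∑ i, f i = X :=
  ⟨fun i => splitPart k i X,
    fun i => splitPart_mem_truncSimplex hk (by positivity) (by exact_mod_cast i.isLt) hX,
    sum_splitPart hk X⟩

end Lattice

theorem Int.cast_mem_truncSimplex {a b c : ℤ} {X : Fin 3 → ℤ} :
    (fun i => (X i : ℝ)) ∈ truncSimplex (a : ℝ) b c ↔ X ∈ truncSimplex a b c := by
  simp only [truncSimplex, Set.mem_ofPred_eq]
  norm_cast

theorem isLatticePt_iff {d : ℕ} {x : Fin d → ℝ} :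
    IsLatticePt x ↔ ∃ X : Fin d → ℤ, (fun i => (X i : ℝ)) = x := by
  refine ⟨fun h => ?_, ?_⟩
  · choose X hX using h
    exact ⟨X, funext fun i => (hX i).symm⟩
  · rintro ⟨X, rfl⟩ i
    exact ⟨X i, rfl⟩

theorem isNormalPolytope_of_forall_int {d : ℕ} {P : Set (Fin d → ℝ)}
    (h : ∀ k : ℕ, 1 ≤ k → ∀ X : Fin d → ℤ, (fun i => (X i : ℝ)) ∈ (k : ℝ) • P →
      ∃ f : Fin k → Fin d → ℤ, (∀ i, (fun j => (f i j : ℝ)) ∈ P) ∧ ∑ i, f i = X) :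
    IsNormalPolytope P := by
  intro k hk x hx hxlat
  obtain ⟨X, rfl⟩ := isLatticePt_iff.mp hxlat
  obtain ⟨f, hfP, hsum⟩ := h k hk X hx
  refine ⟨fun i j => f i j, fun i => ⟨hfP i, isLatticePt_iff.mpr ⟨f i, rfl⟩⟩, ?_⟩
  ext j
  simp [← hsum, Finset.sum_apply]

theorem stmt18_general (n m l₁ : ℕ) (hn : 1 ≤ n) :
    IsNormalPolytope ((n : ℝ) • P1 ∩ {x | x 2 ≤ (m : ℝ)} ∩ {x | x 0 ≤ (l₁ : ℝ)}) := by
  rw [P1_eq_truncSimplex, smul_truncSimplex (by positivity), mul_one, truncSimplex_inter]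
  refine isNormalPolytope_of_forall_int fun k hk X hX => ?_
  rw [smul_truncSimplex (by positivity)] at hX
  have hX' : X ∈ truncSimplex (k * n : ℤ) (k * m) (k * l₁) := by
    rw [← Int.cast_mem_truncSimplex]; push_cast; exact hX
  obtain ⟨f, hf, hsum⟩ := exists_sum_eq_of_mem_truncSimplex hk hX'
  exact ⟨f, fun i => by simpa using Int.cast_mem_truncSimplex.mpr (hf i), hsum⟩

/-- Blowup-type truncations of dilated simplices are normal. -/
theorem stmt18 (n m l₁ : ℕ) (hn : 1 ≤ n) (hm : 1 ≤ m) (hmn : m ≤ n - 1)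
    (hl : m + 1 ≤ l₁) (hln : l₁ ≤ n - 1)
    (hdim : (interior ((n : ℝ) • P1 ∩ {x | x 2 ≤ (m : ℝ)} ∩ {x | x 0 ≤ (l₁ : ℝ)})).Nonempty)
    (hlat : IsLatticePolytope ((n : ℝ) • P1 ∩ {x | x 2 ≤ (m : ℝ)} ∩ {x | x 0 ≤ (l₁ : ℝ)})) :
    IsNormalPolytope ((n : ℝ) • P1 ∩ {x | x 2 ≤ (m : ℝ)} ∩ {x | x 0 ≤ (l₁ : ℝ)}) :=
  stmt18_general n m l₁ hn
end
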